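/- Let s₁, s₂ ∈ ℝ^{4,2} be lightlike with ⟨s₁,s₂⟩ ≠ 0, and let a ∈ ℝ^{4,2} with ⟨a,a⟩ ≠ 0, ⟨s₁,a⟩ ≠ 0 and ⟨s₂,a⟩ ≠ 0 (so s₁ and s₂ are not contained in the linear sphere complex of a). Then ⟨s₂, σ_a(s₂)⟩ = −2⟨s₂,a⟩²/⟨a,a⟩, ⟨σ_a(s₁), s₁⟩ = −2⟨s₁,a⟩²/⟨a,a⟩, ⟨σ_a(s₂), σ_a(s₁)⟩ = ⟨s₂,s₁⟩, and consequently (⟨s₂,σ_a(s₂)⟩·⟨σ_a(s₁),s₁⟩)/(⟨σ_a(s₂),σ_a(s₁)⟩·⟨s₁,s₂⟩) = (2⟨s₁,a⟩⟨s₂,a⟩/(⟨a,a⟩⟨s₁,s₂⟩))². (Light-cone verification of the simplified cross-ratio formula cr(s₂, σ_a(s₂), σ_a(s₁), s₁) = 2⟨s₁,a⟩⟨s₂,a⟩/(⟨a,a⟩⟨s₁,s₂⟩) for four spheres pairwise related by a Lie inversion.) -/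

import Mathlib

noncomputable section

/-- The vector space ℝ^{4,2}, modeled as `Fin 6 → ℝ`. -/
abbrev R42 : Type := Fin 6 → ℝ

/-- The symmetric bilinear form of signature (4,2) on ℝ^{4,2}. -/
def bform : R42 →ₗ[ℝ] R42 →ₗ[ℝ] ℝ :=
  LinearMap.mk₂ ℝ
    (fun x y => x 0 * y 0 + x 1 * y 1 + x 2 * y 2 + x 3 * y 3 - x 4 * y 4 - x 5 * y 5)
    (fun x x' y => by simp only [Pi.add_apply]; ring)
    (fun c x y => by simp only [Pi.smul_apply, smul_eq_mul]; ring)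
    (fun x y y' => by simp only [Pi.add_apply]; ring)
    (fun c x y => by simp only [Pi.smul_apply, smul_eq_mul]; ring)

/-- A lightlike vector: nonzero and isotropic. Represents an oriented 2-sphere. -/
def IsLightlike (v : R42) : Prop := v ≠ 0 ∧ bform v v = 0

/-- The Lie inversion with respect to the linear sphere complex determined by `a`. -/
def lieInv (a r : R42) : R42 := r - (2 * bform r a / bform a a) • a

theorem bform_comm (x y : R42) : bform x y = bform y x := by
  simp only [bform, LinearMap.mk₂_apply]
  ring

theorem bform_lieInv_self (a x : R42) :
    bform (lieInv a x) x = bform x x - 2 * bform x a ^ 2 / bform a a := by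
  simp only [lieInv, map_sub, map_smul, LinearMap.sub_apply, LinearMap.smul_apply, smul_eq_mul,
    bform_comm a x]
  ring

theorem bform_self_lieInv (a x : R42) :
    bform x (lieInv a x) = bform x x - 2 * bform x a ^ 2 / bform a a := by
  rw [bform_comm, bform_lieInv_self]

theorem bform_lieInv_lieInv {a : R42} (haa : bform a a ≠ 0) (x y : R42) :
    bform (lieInv a x) (lieInv a y) = bform x y := by
  simp only [lieInv, map_sub, map_smul, LinearMap.sub_apply, LinearMap.smul_apply, smul_eq_mul,
    bform_comm a y]
  field_simp
  ring

theorem IsLightlike.bform_lieInv_self {s : R42} (hs : IsLightlike s) (a : R42) :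
    bform (lieInv a s) s = -2 * bform s a ^ 2 / bform a a := by
  rw [_root_.bform_lieInv_self, hs.2]
  ring

theorem IsLightlike.bform_self_lieInv {s : R42} (hs : IsLightlike s) (a : R42) :
    bform s (lieInv a s) = -2 * bform s a ^ 2 / bform a a := by
  rw [bform_comm, hs.bform_lieInv_self]

theorem stmt_19_general (a s₁ s₂ : R42)
    (hs₁ : IsLightlike s₁) (hs₂ : IsLightlike s₂)
    (haa : bform a a ≠ 0) :
    bform s₂ (lieInv a s₂) = -2 * bform s₂ a ^ 2 / bform a a ∧
    bform (lieInv a s₁) s₁ = -2 * bform s₁ a ^ 2 / bform a a ∧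
    bform (lieInv a s₂) (lieInv a s₁) = bform s₂ s₁ ∧
    (bform s₂ (lieInv a s₂) * bform (lieInv a s₁) s₁) /
        (bform (lieInv a s₂) (lieInv a s₁) * bform s₁ s₂) =
      (2 * bform s₁ a * bform s₂ a / (bform a a * bform s₁ s₂)) ^ 2 := by
  have h₂ := hs₂.bform_self_lieInv a
  have h₁ := hs₁.bform_lieInv_self a
  have h₁₂ := bform_lieInv_lieInv haa s₂ s₁
  refine ⟨h₂, h₁, h₁₂, ?_⟩
  rw [h₂, h₁, h₁₂, bform_comm s₂ s₁]
  ring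

/-- Light-cone verification of the simplified cross-ratio formula
`cr(s₂, σ_a(s₂), σ_a(s₁), s₁) = 2⟨s₁,a⟩⟨s₂,a⟩/(⟨a,a⟩⟨s₁,s₂⟩)` for four spheres
pairwise related by a Lie inversion. -/
theorem stmt_19 (a s₁ s₂ : R42)
    (hs₁ : IsLightlike s₁) (hs₂ : IsLightlike s₂)
    (hs₁s₂ : bform s₁ s₂ ≠ 0)
    (haa : bform a a ≠ 0) (hs₁a : bform s₁ a ≠ 0) (hs₂a : bform s₂ a ≠ 0) :
    bform s₂ (lieInv a s₂) = -2 * bform s₂ a ^ 2 / bform a a ∧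
    bform (lieInv a s₁) s₁ = -2 * bform s₁ a ^ 2 / bform a a ∧
    bform (lieInv a s₂) (lieInv a s₁) = bform s₂ s₁ ∧
    (bform s₂ (lieInv a s₂) * bform (lieInv a s₁) s₁) /
        (bform (lieInv a s₂) (lieInv a s₁) * bform s₁ s₂) =
      (2 * bform s₁ a * bform s₂ a / (bform a a * bform s₁ s₂)) ^ 2 :=
  stmt_19_general a s₁ s₂ hs₁ hs₂ haa
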